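/- Let k be algebraically closed with char k ≠ 2, 3 and ζ₃ ∈ k a primitive third root of unity. The Hesse group G₂₁₆ ⊂ PGL(3,k), generated by σ = Diag(1, ζ₃, ζ₃²), τ = the cyclic permutation (x₀x₁x₂), σ₁ = [[1,1,1],[1,ζ₃,ζ₃²],[1,ζ₃²,ζ₃]], and σ₂ = [[ζ₃,0,0],[0,0,1],[0,1,0]], acts on the Hesse pencil parameter (μ₀ : μ₁) ∈ ℙ¹ by: σ and τ act trivially, σ₁·(μ₀:μ₁) = (μ₁ − μ₀ : μ₁ + 2μ₀), and σ₂·(μ₀:μ₁) = (μ₀ : ζ₃²μ₁). -/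

import Mathlib

/-!
Every generator is a linear substitution `(x₀, x₁, x₂) ↦ (ℓ₀, ℓ₁, ℓ₂)`, so it suffices to evaluate
the cubic `m₀(a³ + b³ + c³) - 3m₁abc` at the new coordinates. For `σ`, `τ` and `σ₂` this only
uses `ζ³ = 1`. For `σ₁` the new coordinates are the discrete Fourier transform `u, v, w` of
`(a, b, c)`, for which `uvw = a³ + b³ + c³ - 3abc` and `u³ + v³ + w³ = 3(a³ + b³ + c³) + 18abc`;
with the parameters `(μ₁ - μ₀, μ₁ + 2μ₀)` these combine to `-9` times the original cubic.
-/

open MvPolynomial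

/-- The Hesse cubic μ₀(x₀³ + x₁³ + x₂³) - 3μ₁x₀x₁x₂. -/
noncomputable def hesse {k : Type*} [Field k] (μ₀ μ₁ : k) : MvPolynomial (Fin 3) k :=
  C μ₀ * (X 0 ^ 3 + X 1 ^ 3 + X 2 ^ 3) - C (3 * μ₁) * (X 0 * X 1 * X 2)

def hesseForm {R : Type*} [CommRing R] (m₀ m₁ a b c : R) : R :=
  m₀ * (a ^ 3 + b ^ 3 + c ^ 3) - 3 * m₁ * (a * b * c)

section HesseForm

variable {R : Type*} [CommRing R] {z : R} (m₀ m₁ a b c : R)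

lemma hesseForm_diag (hz : z ^ 3 = 1) :
    hesseForm m₀ m₁ a (z * b) (z ^ 2 * c) = hesseForm m₀ m₁ a b c := by
  unfold hesseForm
  linear_combination (m₀ * b ^ 3 + m₀ * (z ^ 3 + 1) * c ^ 3 - 3 * m₁ * a * b * c) * hz

lemma hesseForm_rotate : hesseForm m₀ m₁ c a b = hesseForm m₀ m₁ a b c := by
  unfold hesseForm; ring

lemma hesseForm_swap (hz : z ^ 3 = 1) :
    hesseForm m₀ (z ^ 2 * m₁) (z * a) c b = hesseForm m₀ m₁ a b c := by
  unfold hesseForm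
  linear_combination (m₀ * a ^ 3 - 3 * m₁ * a * b * c) * hz

lemma mul_mul_eq_sum_cubes_sub (hz : z ^ 2 + z + 1 = 0) :
    (a + b + c) * (a + z * b + z ^ 2 * c) * (a + z ^ 2 * b + z * c)
      = a ^ 3 + b ^ 3 + c ^ 3 - 3 * (a * b * c) := by
  have hquad : (a + z * b + z ^ 2 * c) * (a + z ^ 2 * b + z * c)
      = a ^ 2 + b ^ 2 + c ^ 2 - a * b - a * c - b * c := by
    linear_combination (a * b + a * c + (z - 1) * (b ^ 2 + c ^ 2) + (z ^ 2 - z + 1) * b * c) * hz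
  rw [mul_assoc, hquad]
  ring

/-- The coordinates `u, v, w` have discrete Fourier transform `(3a, 3c, 3b)`, so the
factorisation applied to `u, v, w` computes their sum of cubes. -/
lemma sum_cubes_fourier (hz : z ^ 2 + z + 1 = 0) :
    (a + b + c) ^ 3 + (a + z * b + z ^ 2 * c) ^ 3 + (a + z ^ 2 * b + z * c) ^ 3
      = 3 * (a ^ 3 + b ^ 3 + c ^ 3) + 18 * (a * b * c) := by
  set u := a + b + c
  set v := a + z * b + z ^ 2 * c
  set w := a + z ^ 2 * b + z * c
  have hu : u + v + w = 3 * a := by linear_combination (b + c) * hz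
  have hv : u + z * v + z ^ 2 * w = 3 * c := by
    linear_combination (a + (z ^ 2 - z + 1) * b + 2 * (z - 1) * c) * hz
  have hw : u + z ^ 2 * v + z * w = 3 * b := by
    linear_combination (a + 2 * (z - 1) * b + (z ^ 2 - z + 1) * c) * hz
  have key := mul_mul_eq_sum_cubes_sub u v w hz
  rw [hu, hv, hw, mul_mul_eq_sum_cubes_sub a b c hz] at key
  linear_combination -key

lemma hesseForm_fourier (hz : z ^ 2 + z + 1 = 0) :
    hesseForm (m₁ - m₀) (m₁ + 2 * m₀) (a + b + c) (a + z * b + z ^ 2 * c) (a + z ^ 2 * b + z * c)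
      = -9 * hesseForm m₀ m₁ a b c := by
  unfold hesseForm
  linear_combination (m₁ - m₀) * sum_cubes_fourier a b c hz
    - 3 * (m₁ + 2 * m₀) * mul_mul_eq_sum_cubes_sub a b c hz

end HesseForm

lemma IsPrimitiveRoot.sq_add_self_add_one {K : Type*} [CommRing K] [IsDomain K] {ζ : K}
    (hζ : IsPrimitiveRoot ζ 3) : ζ ^ 2 + ζ + 1 = 0 := by
  have hsum := hζ.geom_sum_eq_zero (by norm_num)
  simp only [Finset.sum_range_succ, Finset.sum_range_zero, pow_zero, pow_one, zero_add] at hsum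
  linear_combination hsum

lemma aeval_hesse {k A : Type*} [Field k] [CommRing A] [Algebra k A] (f : Fin 3 → A) (μ₀ μ₁ : k) :
    aeval f (hesse μ₀ μ₁)
      = hesseForm (algebraMap k A μ₀) (algebraMap k A μ₁) (f 0) (f 1) (f 2) := by
  simp only [hesse, hesseForm, map_sub, map_mul, map_add, map_pow, aeval_X, aeval_C, map_ofNat]

lemma hesse_eq_hesseForm {k : Type*} [Field k] (μ₀ μ₁ : k) :
    hesse μ₀ μ₁ = hesseForm (C μ₀) (C μ₁) (X 0) (X 1) (X 2) := by
  simpa using aeval_hesse (X : Fin 3 → MvPolynomial (Fin 3) k) μ₀ μ₁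

theorem stmt16 {k : Type*} [Field k]
    (h3 : (3 : k) ≠ 0)
    (ζ : k) (hζ : IsPrimitiveRoot ζ 3) (μ₀ μ₁ : k) :
    (∃ c : k, c ≠ 0 ∧
      aeval (R := k) (fun i => ∑ j, C ((Matrix.diagonal ![1, ζ, ζ ^ 2]) i j) * X j)
        (hesse μ₀ μ₁) = c • hesse μ₀ μ₁) ∧
    (∃ c : k, c ≠ 0 ∧
      aeval (R := k) (fun i => ∑ j, C ((!![0,0,1;1,0,0;0,1,0] : Matrix (Fin 3) (Fin 3) k) i j) * X j)
        (hesse μ₀ μ₁) = c • hesse μ₀ μ₁) ∧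
    (∃ c : k, c ≠ 0 ∧
      aeval (R := k) (fun i => ∑ j, C ((!![1,1,1;1,ζ,ζ^2;1,ζ^2,ζ] : Matrix (Fin 3) (Fin 3) k) i j) * X j)
        (hesse (μ₁ - μ₀) (μ₁ + 2 * μ₀)) = c • hesse μ₀ μ₁) ∧
    (∃ c : k, c ≠ 0 ∧
      aeval (R := k) (fun i => ∑ j, C ((!![ζ,0,0;0,0,1;0,1,0] : Matrix (Fin 3) (Fin 3) k) i j) * X j)
        (hesse μ₀ (ζ ^ 2 * μ₁)) = c • hesse μ₀ μ₁) := by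
  have hcube : (C ζ : MvPolynomial (Fin 3) k) ^ 3 = 1 := by
    rw [← map_pow, hζ.pow_eq_one, map_one]
  have hcyc : (C ζ : MvPolynomial (Fin 3) k) ^ 2 + C ζ + 1 = 0 := by
    rw [← map_pow, ← map_one C, ← map_add, ← map_add, hζ.sq_add_self_add_one, map_zero]
  have h9 : (-9 : k) ≠ 0 := by
    simpa [show (-9 : k) = -(3 * 3) by norm_num] using mul_ne_zero h3 h3
  refine ⟨⟨1, one_ne_zero, ?_⟩, ⟨1, one_ne_zero, ?_⟩, ⟨-9, h9, ?_⟩, ⟨1, one_ne_zero, ?_⟩⟩ <;>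
    rw [aeval_hesse, hesse_eq_hesseForm μ₀ μ₁, smul_eq_C_mul] <;>
    simp only [Fin.sum_univ_three, Matrix.of_apply, Matrix.cons_val', Matrix.cons_val_zero,
      Matrix.cons_val_one, Matrix.cons_val_two, Matrix.head_cons, Matrix.tail_cons, Matrix.empty_val',
      Matrix.cons_val_fin_one, Matrix.head_fin_const, Matrix.diagonal_apply, Fin.reduceEq, reduceIte,
      algebraMap_eq, map_zero, map_one, map_pow, map_mul, map_add, map_sub, map_neg, map_ofNat,
      zero_mul, one_mul, add_zero, zero_add]
  · exact hesseForm_diag _ _ _ _ _ hcube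
  · exact hesseForm_rotate _ _ _ _ _
  · exact hesseForm_fourier _ _ _ _ _ hcyc
  · exact hesseForm_swap _ _ _ _ _ hcube
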